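/- arXiv:1210.0206 — 2 statements merged into one kernel-verified Lean document; each statement's English description precedes it below -/
import Mathlib

section
/- Let v₁,…,v_p span ℝ^n, Q = Σ v_i v_iᵀ, and let B₁ = I_n, B₂,…,B_r be n×n real matrices. A permutation σ of {1,…,p} admits a matrix A ∈ GL_n(ℝ) with A v_i = v_{σ(i)} for all i and A B_k = B_k A for all k, if and only if v_iᵀ Q⁻¹ B_k v_j = v_{σ(i)}ᵀ Q⁻¹ B_k v_{σ(j)} for all 1 ≤ i, j ≤ p and 1 ≤ k ≤ r. -/
/-!
Write `Q = ∑ vᵢ vᵢᵀ`. If `A vᵢ = v_{σ i}`, then `A Q Aᵀ = Q`, so `Aᵀ Q⁻¹ A = Q⁻¹`, and if moreover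
`A` commutes with `B_k`, then `v_{σ i}ᵀ Q⁻¹ B_k v_{σ j} = v_iᵀ Aᵀ Q⁻¹ A B_k v_j = v_iᵀ Q⁻¹ B_k v_j`.
Conversely, the frame expansion `w = ∑ (vᵢᵀ Q⁻¹ w) vᵢ` shows that the invariance of the colors
forces `A := ∑ v_{σ i} vᵢᵀ Q⁻¹` to send `B_k v_j` to `B_k v_{σ j}`; for `B₁ = I` this says
`A vⱼ = v_{σ j}`, so `A` is surjective, and it commutes with `B_k` on the spanning family `v`.
-/

open Matrix

noncomputable section

variable {n p : ℕ}

/-- The polyhedral cone generated by the vectors `v i`. -/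
def coneOf (v : Fin p → (Fin n → ℝ)) : Set (Fin n → ℝ) :=
  {x | ∃ c : Fin p → ℝ, (∀ i, 0 ≤ c i) ∧ x = ∑ i, c i • v i}

/-- The cone contains no nontrivial linear subspace. -/
def IsPointedCone (v : Fin p → (Fin n → ℝ)) : Prop :=
  ∀ x ∈ coneOf v, -x ∈ coneOf v → x = 0

/-- The generators span the ambient space. -/
def FullDim (v : Fin p → (Fin n → ℝ)) : Prop :=
  Submodule.span ℝ (Set.range v) = ⊤

/-- `v i` generates an extreme ray of the cone. -/
def IsExtremeRayGen (v : Fin p → (Fin n → ℝ)) (i : Fin p) : Prop :=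
  v i ≠ 0 ∧ ∀ x ∈ coneOf v, ∀ y ∈ coneOf v, x + y = v i → ∃ a : ℝ, 0 ≤ a ∧ x = a • v i

/-- `v` is a family of generators of the pairwise distinct extreme rays of a
full-dimensional pointed polyhedral cone. -/
def GoodCone (v : Fin p → (Fin n → ℝ)) : Prop :=
  FullDim v ∧ IsPointedCone v ∧ (∀ i, IsExtremeRayGen v i) ∧
    ∀ i j, i ≠ j → ∀ c : ℝ, 0 < c → v i ≠ c • v j

/-- The cone is decomposable: the space splits as a direct sum with every
generator lying in one of the two factors. -/
def Decomposable (v : Fin p → (Fin n → ℝ)) : Prop :=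
  ∃ V₁ V₂ : Submodule ℝ (Fin n → ℝ), V₁ ≠ ⊥ ∧ V₂ ≠ ⊥ ∧ IsCompl V₁ V₂ ∧
    ∀ i, v i ∈ V₁ ∨ v i ∈ V₂

/-- The component of the cone inside the subspace `W` is decomposable. -/
def DecomposableWithin (W : Submodule ℝ (Fin n → ℝ)) (v : Fin p → (Fin n → ℝ)) : Prop :=
  ∃ W₁ W₂ : Submodule ℝ (Fin n → ℝ), W₁ ≠ ⊥ ∧ W₂ ≠ ⊥ ∧ W₁ ⊔ W₂ = W ∧ W₁ ⊓ W₂ = ⊥ ∧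
    ∀ i, v i ∈ W → (v i ∈ W₁ ∨ v i ∈ W₂)

/-- Projective equivalence of two cones given by generators: an invertible
linear map sends the extreme rays of one bijectively onto those of the other. -/
def ProjEquiv (v w : Fin p → (Fin n → ℝ)) : Prop :=
  ∃ A : (Fin n → ℝ) ≃ₗ[ℝ] (Fin n → ℝ), ∃ σ : Equiv.Perm (Fin p), ∃ lam : Fin p → ℝ,
    (∀ i, 0 < lam i) ∧ ∀ i, A (v i) = lam i • w (σ i)

/-- `A ∈ GL(C)`: an invertible matrix mapping the cone onto itself. -/
def PreservesCone (A : Matrix (Fin n) (Fin n) ℝ) (v : Fin p → (Fin n → ℝ)) : Prop :=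
  IsUnit A.det ∧ (fun x => A *ᵥ x) '' coneOf v = coneOf v

/-- `A` maps the ray `ℝ₊ v i` onto the ray `ℝ₊ v (σ i)` for every `i`. -/
def MapsRays (A : Matrix (Fin n) (Fin n) ℝ) (v : Fin p → (Fin n → ℝ))
    (σ : Equiv.Perm (Fin p)) : Prop :=
  ∀ i, ∃ c : ℝ, 0 < c ∧ A *ᵥ v i = c • v (σ i)

/-- `σ ∈ Proj(C)`: the permutation of extreme rays is induced by some `A ∈ GL(C)`. -/
def ProjSym (v : Fin p → (Fin n → ℝ)) (σ : Equiv.Perm (Fin p)) : Prop :=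
  ∃ A : Matrix (Fin n) (Fin n) ℝ, PreservesCone A v ∧ MapsRays A v σ

/-- `F` is a face of the cone: intersection with a supporting hyperplane. -/
def IsFace (v : Fin p → (Fin n → ℝ)) (F : Set (Fin n → ℝ)) : Prop :=
  ∃ a : Fin n → ℝ, (∀ x ∈ coneOf v, 0 ≤ a ⬝ᵥ x) ∧ F = {x ∈ coneOf v | a ⬝ᵥ x = 0}

/-- The extreme-ray index sets of the `k`-dimensional faces. -/
def faceIdxSets (v : Fin p → (Fin n → ℝ)) (k : ℕ) : Set (Set (Fin p)) :=
  {S | ∃ F : Set (Fin n → ℝ), IsFace v F ∧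
    Module.finrank ℝ (Submodule.span ℝ F) = k ∧ S = {i | v i ∈ F}}

/-- `σ` preserves the family of (ray index sets of) `k`-dimensional faces. -/
def PreservesFaces (v : Fin p → (Fin n → ℝ)) (σ : Equiv.Perm (Fin p)) (k : ℕ) : Prop :=
  ∀ S ∈ faceIdxSets v k, (⇑σ) '' S ∈ faceIdxSets v k

/-- `σ ∈ Skel_k(C)`: preserves all faces of dimension at most `k`. -/
def SkelMem (v : Fin p → (Fin n → ℝ)) (k : ℕ) (σ : Equiv.Perm (Fin p)) : Prop :=
  ∀ l, l ≤ k → PreservesFaces v σ l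

/-- `σ ∈ Comb(C)`: preserves the faces of all dimensions `0 ≤ k ≤ n-1`. -/
def CombMem (v : Fin p → (Fin n → ℝ)) (σ : Equiv.Perm (Fin p)) : Prop :=
  ∀ l, l ≤ n - 1 → PreservesFaces v σ l

/-- `σ ∈ Lin_v(C)`: realized exactly on generators by an invertible matrix. -/
def LinMem (v : Fin p → (Fin n → ℝ)) (σ : Equiv.Perm (Fin p)) : Prop :=
  ∃ A : Matrix (Fin n) (Fin n) ℝ, IsUnit A.det ∧ ∀ i, A *ᵥ v i = v (σ i)

namespace Matrix

section CommRing

variable {R ι m : Type*} [CommRing R] [Fintype ι]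

def frameMatrix (v : ι → m → R) : Matrix m m R :=
  ∑ i, vecMulVec (v i) (v i)

theorem frameMatrix_comp_perm (v : ι → m → R) (σ : Equiv.Perm ι) :
    frameMatrix (v ∘ σ) = frameMatrix v :=
  Equiv.sum_comp σ fun i => vecMulVec (v i) (v i)

theorem frameMatrix_eq_transpose_mul (v : ι → m → R) : frameMatrix v = (of v)ᵀ * of v := by
  ext a b
  simp [frameMatrix, vecMulVec_apply, mul_apply, sum_apply]

variable [Fintype m]

theorem sum_vecMulVec_mulVec (u w : ι → m → R) (x : m → R) :
    (∑ i, vecMulVec (u i) (w i)) *ᵥ x = ∑ i, (w i ⬝ᵥ x) • u i := by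
  simp only [sum_mulVec, vecMulVec_mulVec, op_smul_eq_smul]

theorem frameMatrix_mulVec (v : ι → m → R) (x : m → R) :
    frameMatrix v *ᵥ x = ∑ i, (v i ⬝ᵥ x) • v i :=
  sum_vecMulVec_mulVec v v x

theorem mul_frameMatrix_mul_transpose (A : Matrix m m R) (v : ι → m → R) :
    A * frameMatrix v * Aᵀ = frameMatrix fun i => A *ᵥ v i := by
  simp only [frameMatrix, Finset.mul_sum, Finset.sum_mul, mul_vecMulVec, vecMulVec_mul,
    vecMul_transpose]

theorem mul_frameMatrix_mul_transpose_of_mulVec_eq {A : Matrix m m R} {v : ι → m → R}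
    {σ : Equiv.Perm ι} (hAv : ∀ i, A *ᵥ v i = v (σ i)) :
    A * frameMatrix v * Aᵀ = frameMatrix v := by
  rw [mul_frameMatrix_mul_transpose, funext hAv]
  exact frameMatrix_comp_perm v σ

theorem mulVec_dotProduct_mulVec_mulVec (A M : Matrix m m R) (x y : m → R) :
    (A *ᵥ x) ⬝ᵥ (M *ᵥ (A *ᵥ y)) = x ⬝ᵥ ((Aᵀ * M * A) *ᵥ y) := by
  rw [← mulVec_mulVec, ← mulVec_mulVec, dotProduct_mulVec x, vecMul_transpose]

variable [DecidableEq m]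

def transferMatrix (v : ι → m → R) (σ : Equiv.Perm ι) : Matrix m m R :=
  (∑ i, vecMulVec (v (σ i)) (v i)) * (frameMatrix v)⁻¹

theorem transpose_mul_inv_mul_of_mul_mul_transpose {A Q : Matrix m m R} (hA : IsUnit A.det)
    (h : A * Q * Aᵀ = Q) : Aᵀ * Q⁻¹ * A = Q⁻¹ := by
  have hAT : IsUnit Aᵀ.det := by rwa [det_transpose]
  conv_lhs => rw [← h, Matrix.mul_inv_rev, Matrix.mul_inv_rev]
  simp only [← Matrix.mul_assoc, mul_nonsing_inv _ hAT, Matrix.one_mul]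
  rw [Matrix.mul_assoc, nonsing_inv_mul _ hA, Matrix.mul_one]

theorem dotProduct_inv_frameMatrix_mul_mulVec_perm {A M : Matrix m m R} {v : ι → m → R}
    {σ : Equiv.Perm ι} (hA : IsUnit A.det) (hAv : ∀ i, A *ᵥ v i = v (σ i)) (hAM : A * M = M * A)
    (i j : ι) :
    v (σ i) ⬝ᵥ (((frameMatrix v)⁻¹ * M) *ᵥ v (σ j)) = v i ⬝ᵥ (((frameMatrix v)⁻¹ * M) *ᵥ v j) := by
  have hQ := transpose_mul_inv_mul_of_mul_mul_transpose hA
    (mul_frameMatrix_mul_transpose_of_mulVec_eq hAv)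
  rw [← hAv, ← hAv, mulVec_dotProduct_mulVec_mulVec]
  congr 2
  calc Aᵀ * ((frameMatrix v)⁻¹ * M) * A = Aᵀ * (frameMatrix v)⁻¹ * A * M := by
        simp only [Matrix.mul_assoc, hAM]
    _ = (frameMatrix v)⁻¹ * M := by rw [hQ]

theorem transferMatrix_mulVec_mulVec {v : ι → m → R} {σ : Equiv.Perm ι} {M : Matrix m m R}
    (hQ : IsUnit (frameMatrix v).det)
    (hcolor : ∀ i j,
      v (σ i) ⬝ᵥ (((frameMatrix v)⁻¹ * M) *ᵥ v (σ j)) = v i ⬝ᵥ (((frameMatrix v)⁻¹ * M) *ᵥ v j))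
    (j : ι) :
    transferMatrix v σ *ᵥ (M *ᵥ v j) = M *ᵥ v (σ j) := by
  set Q := frameMatrix v
  calc transferMatrix v σ *ᵥ (M *ᵥ v j)
      = ∑ i, (v i ⬝ᵥ ((Q⁻¹ * M) *ᵥ v j)) • v (σ i) := by
        rw [transferMatrix, ← mulVec_mulVec, sum_vecMulVec_mulVec, mulVec_mulVec]
    _ = ∑ i, (v (σ i) ⬝ᵥ ((Q⁻¹ * M) *ᵥ v (σ j))) • v (σ i) := by simp only [hcolor]
    _ = Q *ᵥ ((Q⁻¹ * M) *ᵥ v (σ j)) := by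
        rw [frameMatrix_mulVec]
        exact Equiv.sum_comp σ fun i => (v i ⬝ᵥ ((Q⁻¹ * M) *ᵥ v (σ j))) • v i
    _ = M *ᵥ v (σ j) := by
        rw [mulVec_mulVec, ← Matrix.mul_assoc, mul_nonsing_inv _ hQ, Matrix.one_mul]

end CommRing

section Span

variable {R ι m : Type*} [CommRing R] [Fintype m] [DecidableEq m] {v : ι → m → R}

theorem ext_of_mulVec_eq_of_span_eq_top (hspan : Submodule.span R (Set.range v) = ⊤)
    {M N : Matrix m m R} (h : ∀ i, M *ᵥ v i = N *ᵥ v i) : M = N :=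
  Matrix.toLin'.injective (LinearMap.ext_on_range hspan h)

theorem isUnit_det_of_mulVec_eq_perm (hspan : Submodule.span R (Set.range v) = ⊤)
    {A : Matrix m m R} {σ : Equiv.Perm ι} (hAv : ∀ i, A *ᵥ v i = v (σ i)) : IsUnit A.det := by
  rw [← isUnit_iff_isUnit_det, ← mulVec_surjective_iff_isUnit, ← coe_mulVecLin,
    ← LinearMap.range_eq_top, eq_top_iff, ← hspan, Submodule.span_le]
  rintro _ ⟨i, rfl⟩
  exact ⟨v (σ.symm i), by simp [hAv]⟩

end Span

section OrderedField

variable {R ι m : Type*} [Field R] [LinearOrder R] [IsStrictOrderedRing R] [Fintype ι] [Fintype m]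
  {v : ι → m → R}

theorem eq_zero_of_forall_dotProduct_eq_zero (hspan : Submodule.span R (Set.range v) = ⊤)
    {x : m → R} (h : ∀ i, v i ⬝ᵥ x = 0) : x = 0 := by
  have hx : x ∈ Submodule.span R (Set.range v) := hspan ▸ Submodule.mem_top
  obtain ⟨c, hc⟩ := (Submodule.mem_span_range_iff_exists_fun R).mp hx
  rw [← dotProduct_self_eq_zero]
  nth_rw 1 [← hc]
  simp only [sum_dotProduct, smul_dotProduct, h, smul_zero, Finset.sum_const_zero]

theorem isUnit_det_frameMatrix [DecidableEq m] (hspan : Submodule.span R (Set.range v) = ⊤) :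
    IsUnit (frameMatrix v).det := by
  rw [← isUnit_iff_isUnit_det, ← mulVec_injective_iff_isUnit, ← coe_mulVecLin,
    ← LinearMap.ker_eq_bot, frameMatrix_eq_transpose_mul, ker_mulVecLin_transpose_mul_self,
    ker_mulVecLin_eq_bot_iff]
  exact fun x hx => eq_zero_of_forall_dotProduct_eq_zero hspan fun i => congrFun hx i

end OrderedField

end Matrix

/-- σ is realized by an invertible A commuting with every B_k and
permuting the vᵢ iff the vector-valued colors vᵢᵀ Q⁻¹ B_k vⱼ are σ-invariant. -/
theorem stmt_8 (n p r : ℕ) (v : Fin p → (Fin n → ℝ))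
    (hspan : Submodule.span ℝ (Set.range v) = ⊤)
    (Q : Matrix (Fin n) (Fin n) ℝ) (hQ : Q = ∑ i, vecMulVec (v i) (v i))
    (B : Fin (r + 1) → Matrix (Fin n) (Fin n) ℝ) (hB : B 0 = 1)
    (σ : Equiv.Perm (Fin p)) :
    (∃ A : Matrix (Fin n) (Fin n) ℝ, IsUnit A.det ∧
        (∀ i, A *ᵥ v i = v (σ i)) ∧ ∀ k, A * B k = B k * A) ↔
      ∀ (i j : Fin p) (k : Fin (r + 1)),
        v i ⬝ᵥ ((Q⁻¹ * B k) *ᵥ v j) = v (σ i) ⬝ᵥ ((Q⁻¹ * B k) *ᵥ v (σ j)) := by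
  replace hQ : Q = frameMatrix v := hQ
  subst hQ
  constructor
  · rintro ⟨A, hA, hAv, hAB⟩ i j k
    exact (dotProduct_inv_frameMatrix_mul_mulVec_perm hA hAv (hAB k) i j).symm
  · intro hcolor
    have hmap : ∀ k j, transferMatrix v σ *ᵥ (B k *ᵥ v j) = B k *ᵥ v (σ j) := fun k =>
      transferMatrix_mulVec_mulVec (isUnit_det_frameMatrix hspan) fun i j => (hcolor i j k).symm
    have hAv : ∀ j, transferMatrix v σ *ᵥ v j = v (σ j) := by
      simpa only [hB, one_mulVec] using hmap 0
    refine ⟨transferMatrix v σ, isUnit_det_of_mulVec_eq_perm hspan hAv, hAv, fun k => ?_⟩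
    refine ext_of_mulVec_eq_of_span_eq_top hspan fun j => ?_
    rw [← mulVec_mulVec, hmap, ← mulVec_mulVec, hAv]
end
end

section
/- Let C be a non-decomposable pointed full-dimensional polyhedral cone in ℝ^n with extreme ray generators v₁,…,v_p. For a permutation σ ∈ Sym(p), the set of vectors (α₁,…,α_p) ∈ ℝ^p satisfying the linear equations U_σ · diag(α₁,…,α_n) · U⁻¹ · V = V_σ · diag(α₁,…,α_p) — where V is the n×p matrix with columns v_i, V_σ is V with columns permuted by σ, and U, U_σ are the invertible first-n-column submatrices — is a linear subspace of dimension at most 1 if it contains a strictly positive vector. -/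
open Matrix

noncomputable section

variable {n p : ℕ}

/-!
Column by column, `α` solves the system iff `A_α = U_σ diag(α) U⁻¹` sends each `v i` to
`α i • v (σ i)`; this is linear in `α`. If `β` is a solution without zero entries, `A_β` hits
every vector of the spanning family `v ∘ σ`, so it is invertible, and `A_β⁻¹ A_α` has each `v i`
as an eigenvector with eigenvalue `α i / β i`. Grouping the generators by eigenvalue splits the
space into two complementary subspaces each generator lies in (eigenspaces of distinct
eigenvalues are independent); since the cone is not decomposable there is only one eigenvalue,
so `α` is a multiple of `β`.
-/

open Module

namespace Matrix

variable {R ι m m' k : Type*} [CommSemiring R] [Fintype k] [Fintype m'] [Fintype ι]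
  [DecidableEq k] [DecidableEq ι]

def diagonalEquationSolutions (P : Matrix m k R) (Q : Matrix k m' R) (V : Matrix m' ι R)
    (W : Matrix m ι R) (g : k → ι) : Submodule R (ι → R) where
  carrier := {α | P * diagonal (fun s => α (g s)) * Q * V = W * diagonal α}
  add_mem' {α β} hα hβ := by
    have hdiag_g : diagonal (fun s => (α + β) (g s)) =
        diagonal (fun s => α (g s)) + diagonal (fun s => β (g s)) := (diagonal_add _ _).symm
    have hdiag : diagonal (α + β) = diagonal α + diagonal β := (diagonal_add _ _).symm
    simp only [Set.mem_ofPred_eq] at *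
    rw [hdiag_g, hdiag, Matrix.mul_add, Matrix.add_mul, Matrix.add_mul, Matrix.mul_add, hα, hβ]
  zero_mem' := by simp
  smul_mem' c α hα := by
    have hdiag : diagonal (fun s => (c • α) (g s)) = c • diagonal (fun s => α (g s)) :=
      diagonal_smul _ _
    simp only [Set.mem_ofPred_eq] at *
    rw [hdiag, diagonal_smul, Matrix.mul_smul, Matrix.smul_mul, Matrix.smul_mul, Matrix.mul_smul,
      hα]

theorem mul_columns_eq_columns_mul_diagonal_iff {l : Type*} [Fintype l] (M : Matrix m l R)
    (v : ι → l → R) (w : ι → m → R) (α : ι → R) :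
    M * of (fun r i => v i r) = of (fun r i => w i r) * diagonal α ↔
      ∀ i, M *ᵥ v i = α i • w i := by
  simp only [← Matrix.ext_iff, mul_diagonal]
  simp only [funext_iff, mul_apply, mulVec, dotProduct, of_apply, Pi.smul_apply, smul_eq_mul]
  rw [forall_comm]
  simp only [mul_comm (α _)]

end Matrix

section Eigenvectors

variable {K M ι : Type*} [Field K] [AddCommGroup M] [Module K M]

theorem exists_isCompl_of_hasEigenvector_of_ne {v : ι → M}
    (hspan : Submodule.span K (Set.range v) = ⊤) {f : End K M} {t : ι → K}
    (hf : ∀ i, f.HasEigenvector (t i) (v i)) {i j : ι} (hij : t i ≠ t j) :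
    ∃ V₁ V₂ : Submodule K M, V₁ ≠ ⊥ ∧ V₂ ≠ ⊥ ∧ IsCompl V₁ V₂ ∧ ∀ l, v l ∈ V₁ ∨ v l ∈ V₂ := by
  set V₁ := Submodule.span K (v '' {l | t l = t i})
  set V₂ := Submodule.span K (v '' {l | t l ≠ t i})
  have hmem : ∀ l, v l ∈ V₁ ∨ v l ∈ V₂ := fun l => by
    by_cases h : t l = t i
    · exact .inl (Submodule.subset_span ⟨l, h, rfl⟩)
    · exact .inr (Submodule.subset_span ⟨l, h, rfl⟩)
  have hV₁ : V₁ ≤ f.eigenspace (t i) := by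
    rw [Submodule.span_le]
    rintro _ ⟨l, hl, rfl⟩
    exact hl ▸ (hf l).1
  have hV₂ : V₂ ≤ ⨆ (μ : K) (_ : μ ≠ t i), f.eigenspace μ := by
    rw [Submodule.span_le]
    rintro _ ⟨l, hl, rfl⟩
    exact Submodule.mem_iSup_of_mem (t l) (Submodule.mem_iSup_of_mem hl (hf l).1)
  have hsup : V₁ ⊔ V₂ = ⊤ := by
    rw [eq_top_iff, ← hspan, Submodule.span_le]
    rintro _ ⟨l, rfl⟩
    exact (hmem l).elim (Submodule.mem_sup_left ·) (Submodule.mem_sup_right ·)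
  refine ⟨V₁, V₂, ?_, ?_, ⟨(f.eigenspaces_iSupIndep (t i)).mono hV₁ hV₂,
    codisjoint_iff.mpr hsup⟩, hmem⟩
  · exact Submodule.ne_bot_iff _ |>.mpr ⟨v i, Submodule.subset_span ⟨i, rfl, rfl⟩, (hf i).2⟩
  · exact Submodule.ne_bot_iff _ |>.mpr ⟨v j, Submodule.subset_span ⟨j, hij.symm, rfl⟩, (hf j).2⟩

theorem exists_hasEigenvector_div [FiniteDimensional K M] {v w : ι → M} (hv : ∀ i, v i ≠ 0)
    (hw : Submodule.span K (Set.range w) = ⊤) {A B : End K M} {α β : ι → K}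
    (hA : ∀ i, A (v i) = α i • w i) (hB : ∀ i, B (v i) = β i • w i) (hβ : ∀ i, β i ≠ 0) :
    ∃ f : End K M, ∀ i, f.HasEigenvector (α i / β i) (v i) := by
  have hsurj : Function.Surjective B := by
    rw [← LinearMap.range_eq_top, eq_top_iff, ← hw, Submodule.span_le]
    rintro _ ⟨i, rfl⟩
    exact ⟨(β i)⁻¹ • v i, by rw [map_smul, hB, smul_smul, inv_mul_cancel₀ (hβ i), one_smul]⟩
  let e := LinearEquiv.ofBijective B ⟨LinearMap.injective_iff_surjective.mpr hsurj, hsurj⟩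
  refine ⟨e.symm.toLinearMap ∘ₗ A, fun i => ⟨?_, hv i⟩⟩
  rw [Module.End.mem_eigenspace_iff, LinearMap.comp_apply, LinearEquiv.coe_coe,
    LinearEquiv.symm_apply_eq, map_smul]
  change A (v i) = _ • B (v i)
  rw [hB, hA, smul_smul, div_mul_cancel₀ _ (hβ i)]

end Eigenvectors

theorem eigenvalue_eq_of_not_decomposable {v : Fin p → Fin n → ℝ} (hfull : FullDim v)
    (hnd : ¬Decomposable v) {f : End ℝ (Fin n → ℝ)} {t : Fin p → ℝ}
    (hf : ∀ i, f.HasEigenvector (t i) (v i)) (i j : Fin p) : t i = t j := by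
  by_contra hij
  exact hnd (exists_isCompl_of_hasEigenvector_of_ne hfull hf hij)

theorem exists_eq_smul_of_mulVec_eq_smul {v : Fin p → Fin n → ℝ} (hfull : FullDim v)
    (hnd : ¬Decomposable v) (hv : ∀ i, v i ≠ 0) {σ : Equiv.Perm (Fin p)}
    {A B : Matrix (Fin n) (Fin n) ℝ} {α β : Fin p → ℝ}
    (hA : ∀ i, A *ᵥ v i = α i • v (σ i)) (hB : ∀ i, B *ᵥ v i = β i • v (σ i))
    (hβ : ∀ i, β i ≠ 0) : ∃ c : ℝ, α = c • β := by
  have hσ : Submodule.span ℝ (Set.range (v ∘ σ)) = ⊤ := by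
    rw [σ.surjective.range_comp]; exact hfull
  obtain ⟨f, hf⟩ := exists_hasEigenvector_div hv hσ (A := A.mulVecLin) (B := B.mulVecLin) hA hB hβ
  rcases isEmpty_or_nonempty (Fin p) with hp | ⟨⟨i₀⟩⟩
  · exact ⟨0, Subsingleton.elim _ _⟩
  refine ⟨α i₀ / β i₀, funext fun i => ?_⟩
  rw [Pi.smul_apply, smul_eq_mul, ← eigenvalue_eq_of_not_decomposable hfull hnd hf i i₀,
    div_mul_cancel₀ _ (hβ i)]

theorem stmt_17_general (n p : ℕ) (hnp : n ≤ p) (v : Fin p → (Fin n → ℝ))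
    (hv : GoodCone v) (hnd : ¬ Decomposable v) (σ : Equiv.Perm (Fin p))
    (Vm Vσ : Matrix (Fin n) (Fin p) ℝ) (U Uσ : Matrix (Fin n) (Fin n) ℝ)
    (hVm : Vm = Matrix.of fun r i => v i r)
    (hVσ : Vσ = Matrix.of fun r i => v (σ i) r)
    (S : Set (Fin p → ℝ))
    (hS : S = {α | Uσ * Matrix.diagonal (fun s => α (Fin.castLE hnp s)) * U⁻¹ * Vm =
      Vσ * Matrix.diagonal α})
    (hpos : ∃ α ∈ S, ∀ i, 0 < α i) :
    (∀ α ∈ S, ∀ β ∈ S, α + β ∈ S) ∧ (∀ (c : ℝ), ∀ α ∈ S, c • α ∈ S) ∧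
      ∃ α₀ : Fin p → ℝ, ∀ α ∈ S, ∃ c : ℝ, α = c • α₀ := by
  subst hVm hVσ
  obtain rfl : S = diagonalEquationSolutions Uσ U⁻¹ _ _ (Fin.castLE hnp) := hS
  have hcols : ∀ α ∈ diagonalEquationSolutions Uσ U⁻¹ _ _ (Fin.castLE hnp), ∀ i,
      (Uσ * diagonal (fun s => α (Fin.castLE hnp s)) * U⁻¹) *ᵥ v i = α i • v (σ i) :=
    fun α hα => (mul_columns_eq_columns_mul_diagonal_iff _ v (fun i => v (σ i)) α).mp hα
  obtain ⟨β, hβ, hβpos⟩ := hpos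
  refine ⟨fun _ hα _ hβ => add_mem hα hβ, fun c _ hα => Submodule.smul_mem _ c hα,
    β, fun α hα => ?_⟩
  exact exists_eq_smul_of_mulVec_eq_smul hv.1 hnd (fun i => (hv.2.2.1 i).1)
    (hcols α hα) (hcols β hβ) (fun i => (hβpos i).ne')

/-- For a non-decomposable cone, the solution set of the linear system
U_σ · diag(α₁,…,α_n) · U⁻¹ · V = V_σ · diag(α₁,…,α_p) is a linear subspace which
has dimension at most 1 provided it contains a strictly positive vector. -/
theorem stmt_17 (n p : ℕ) (hnp : n ≤ p) (v : Fin p → (Fin n → ℝ))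
    (hv : GoodCone v) (hnd : ¬ Decomposable v) (σ : Equiv.Perm (Fin p))
    (Vm Vσ : Matrix (Fin n) (Fin p) ℝ) (U Uσ : Matrix (Fin n) (Fin n) ℝ)
    (hVm : Vm = Matrix.of fun r i => v i r)
    (hVσ : Vσ = Matrix.of fun r i => v (σ i) r)
    (hU : U = Matrix.of fun r s => v (Fin.castLE hnp s) r)
    (hUσ : Uσ = Matrix.of fun r s => v (σ (Fin.castLE hnp s)) r)
    (hUdet : IsUnit U.det)
    (S : Set (Fin p → ℝ))
    (hS : S = {α | Uσ * Matrix.diagonal (fun s => α (Fin.castLE hnp s)) * U⁻¹ * Vm =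
      Vσ * Matrix.diagonal α})
    (hpos : ∃ α ∈ S, ∀ i, 0 < α i) :
    (∀ α ∈ S, ∀ β ∈ S, α + β ∈ S) ∧ (∀ (c : ℝ), ∀ α ∈ S, c • α ∈ S) ∧
      ∃ α₀ : Fin p → ℝ, ∀ α ∈ S, ∃ c : ℝ, α = c • α₀ :=
  stmt_17_general n p hnp v hv hnd σ Vm Vσ U Uσ hVm hVσ S hS hpos
end
end
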